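/- arXiv:1310.1969 — 2 statements merged into one kernel-verified Lean document; each statement's English description precedes it below -/
import Mathlib

section
/- The sorted ℓ₁ norm satisfies the triangle inequality: for all a, b ∈ ℝ^p and any nonincreasing nonnegative sequence λ, J_λ(a + b) ≤ J_λ(a) + J_λ(b), where J_λ(x) = Σᵢ λᵢ |x|₍ᵢ₎. -/
/-!
Sort `a + b` in decreasing order of absolute value and use `|a + b| ≤ |a| + |b|` termwise
(this needs `λ ≥ 0`). Each of the two resulting sums pairs `λ` with the absolute values of
`a` (resp. `b`) in some order, which by the rearrangement inequality (this needs `λ`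
antitone) is at most the sum pairing `λ` with the decreasingly sorted absolute values.
-/

/-- The `i`-th largest absolute value among the coordinates of `b`. -/
noncomputable def sortedAbs {p : ℕ} (b : Fin p → ℝ) (i : Fin p) : ℝ :=
  |b (Tuple.sort (fun j => |b j|) i.rev)|

/-- The sorted ℓ₁ norm `J_λ(b) = ∑ᵢ λᵢ |b|₍ᵢ₎`. -/
noncomputable def sortedL1 {p : ℕ} (lam b : Fin p → ℝ) : ℝ :=
  ∑ i, lam i * sortedAbs b i

section SortedAbs

variable {p : ℕ}

noncomputable def sortedAbsPerm (x : Fin p → ℝ) : Equiv.Perm (Fin p) :=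
  Fin.revPerm.trans (Tuple.sort fun j => |x j|)

lemma sortedAbs_eq_abs_sortedAbsPerm (x : Fin p → ℝ) (i : Fin p) :
    sortedAbs x i = |x (sortedAbsPerm x i)| :=
  rfl

lemma sortedAbs_antitone (x : Fin p → ℝ) : Antitone (sortedAbs x) :=
  fun _ _ hij => Tuple.monotone_sort (fun j => |x j|) (Fin.rev_le_rev.mpr hij)

lemma abs_comp_perm_eq_sortedAbs_comp (x : Fin p → ℝ) (σ : Equiv.Perm (Fin p)) :
    ∃ π : Equiv.Perm (Fin p), ∀ i, |x (σ i)| = sortedAbs x (π i) :=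
  ⟨σ.trans (sortedAbsPerm x).symm, fun i => by
    simp [sortedAbs_eq_abs_sortedAbsPerm]⟩

lemma sum_mul_abs_comp_perm_le_sortedL1 {lam : Fin p → ℝ} (hmono : Antitone lam)
    (x : Fin p → ℝ) (σ : Equiv.Perm (Fin p)) :
    ∑ i, lam i * |x (σ i)| ≤ sortedL1 lam x := by
  obtain ⟨π, hπ⟩ := abs_comp_perm_eq_sortedAbs_comp x σ
  simp_rw [hπ]
  exact (hmono.monovary (sortedAbs_antitone x)).sum_mul_comp_perm_le_sum_mul

end SortedAbs

/-- triangle inequality for the sorted ℓ₁ norm. -/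
theorem sortedL1_triangle {p : ℕ} (lam : Fin p → ℝ)
    (hmono : Antitone lam) (hnonneg : ∀ i, 0 ≤ lam i) (a b : Fin p → ℝ) :
    sortedL1 lam (a + b) ≤ sortedL1 lam a + sortedL1 lam b := by
  set σ := sortedAbsPerm (a + b)
  calc sortedL1 lam (a + b)
      = ∑ i, lam i * |(a + b) (σ i)| := rfl
    _ ≤ ∑ i, (lam i * |a (σ i)| + lam i * |b (σ i)|) := by
        gcongr with i
        rw [← mul_add]
        exact mul_le_mul_of_nonneg_left (abs_add_le _ _) (hnonneg i)
    _ = ∑ i, lam i * |a (σ i)| + ∑ i, lam i * |b (σ i)| := Finset.sum_add_distrib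
    _ ≤ sortedL1 lam a + sortedL1 lam b :=
        add_le_add (sum_mul_abs_comp_perm_le_sortedL1 hmono a σ)
          (sum_mul_abs_comp_perm_le_sortedL1 hmono b σ)
end

section
/- For nonincreasing nonnegative λ and any two vectors b, w ∈ ℝ^p, one has ⟨w, b⟩ ≤ Σᵢ |w|₍ᵢ₎ |b|₍ᵢ₎, i.e., the inner product is maximized when the absolute values are similarly ordered (a rearrangement inequality), and consequently ⟨w, b⟩ ≤ J_λ(b) whenever Σ_{j≤i} |w|₍ⱼ₎ ≤ Σ_{j≤i} λⱼ for all i. -/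
open Finset Equiv

theorem Monovary.sum_mul_le_sum_mul_comp_perm {ι α : Type*} [Fintype ι] [Semiring α]
    [LinearOrder α] [IsStrictOrderedRing α] [ExistsAddOfLE α] {f g : ι → α} {σ τ : Perm ι}
    (h : Monovary (f ∘ σ) (g ∘ τ)) : ∑ i, f i * g i ≤ ∑ i, f (σ i) * g (τ i) :=
  calc ∑ i, f i * g i = ∑ i, (f ∘ σ) i * (g ∘ τ) ((τ⁻¹ * σ) i) := by
        rw [← Equiv.sum_comp σ]; simp
    _ ≤ ∑ i, f (σ i) * g (τ i) := h.sum_mul_comp_perm_le_sum_mul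

theorem Finset.sum_mul_nonneg_of_sum_filter_le_nonneg {ι α : Type*} [LinearOrder ι] [CommRing α]
    [LinearOrder α] [IsStrictOrderedRing α] (s : Finset ι) {d c : ι → α}
    (hc : AntitoneOn c s) (hc₀ : ∀ i ∈ s, 0 ≤ c i)
    (hd : ∀ i ∈ s, 0 ≤ ∑ j ∈ s with j ≤ i, d j) : 0 ≤ ∑ i ∈ s, d i * c i := by
  classical
  induction s using Finset.induction_on_max generalizing c with
  | empty => simp
  | insert m t hlt ih =>
    have hm : m ∉ t := fun h => lt_irrefl m (hlt m h)
    have hfilter : ∀ i ∈ t, {j ∈ insert m t | j ≤ i} = {j ∈ t | j ≤ i} := fun i hi => by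
      rw [filter_insert, if_neg (not_le.mpr (hlt i hi))]
    have hcm : ∀ i ∈ t, c m ≤ c i := fun i hi =>
      hc (mem_insert_of_mem hi) (mem_insert_self m t) (hlt i hi).le
    have hrest : 0 ≤ ∑ i ∈ t, d i * (c i - c m) :=
      ih (fun i hi j hj hij =>
          sub_le_sub_right (hc (mem_insert_of_mem hi) (mem_insert_of_mem hj) hij) _)
        (fun i hi => sub_nonneg.mpr (hcm i hi))
        (fun i hi => hfilter i hi ▸ hd i (mem_insert_of_mem hi))
    have htotal : 0 ≤ ∑ j ∈ insert m t, d j := by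
      have := hd m (mem_insert_self m t)
      rwa [filter_true_of_mem fun j hj => ?_] at this
      rcases mem_insert.mp hj with rfl | hj
      exacts [le_rfl, (hlt j hj).le]
    -- Lower every weight by the smallest one, `c m`; the removed part is `c m` times the full sum.
    have hsplit : ∑ i ∈ insert m t, d i * c i
        = ∑ i ∈ t, d i * (c i - c m) + (∑ j ∈ insert m t, d j) * c m := by
      simp only [sum_insert hm, mul_sub, sum_sub_distrib, add_mul, sum_mul]
      ring
    rw [hsplit]
    exact add_nonneg hrest (mul_nonneg htotal (hc₀ m (mem_insert_self m t)))

theorem sum_mul_le_sum_mul_of_sum_Iic_le {ι α : Type*} [LinearOrder ι] [Fintype ι]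
    [LocallyFiniteOrderBot ι] [CommRing α] [LinearOrder α] [IsStrictOrderedRing α]
    {a l c : ι → α} (hc : Antitone c) (hc₀ : ∀ i, 0 ≤ c i)
    (h : ∀ i, ∑ j ∈ Iic i, a j ≤ ∑ j ∈ Iic i, l j) : ∑ i, a i * c i ≤ ∑ i, l i * c i := by
  have := (univ : Finset ι).sum_mul_nonneg_of_sum_filter_le_nonneg (d := l - a) (hc.antitoneOn _)
    (fun i _ => hc₀ i) (fun i _ => by
      simpa [filter_ge_eq_Iic, sum_sub_distrib] using h i)
  simpa [sub_mul, sum_sub_distrib] using this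

theorem exists_perm_sortedAbs_eq {p : ℕ} (b : Fin p → ℝ) :
    ∃ σ : Perm (Fin p), ∀ i, sortedAbs b i = |b (σ i)| :=
  ⟨Fin.revPerm.trans (Tuple.sort fun j => |b j|), fun _ => rfl⟩

theorem antitone_sortedAbs {p : ℕ} (b : Fin p → ℝ) : Antitone (sortedAbs b) :=
  fun _ _ hij => Tuple.monotone_sort (fun j => |b j|) (Fin.rev_le_rev.mpr hij)

theorem sum_abs_mul_abs_le_sum_sortedAbs_mul {p : ℕ} (w b : Fin p → ℝ) :
    ∑ i, |w i| * |b i| ≤ ∑ i, sortedAbs w i * sortedAbs b i := by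
  obtain ⟨σ, hσ⟩ := exists_perm_sortedAbs_eq w
  obtain ⟨τ, hτ⟩ := exists_perm_sortedAbs_eq b
  have hmono : Monovary ((fun i => |w i|) ∘ σ) ((fun i => |b i|) ∘ τ) := by
    simpa only [Function.comp_def, ← hσ, ← hτ] using
      (antitone_sortedAbs w).monovary (antitone_sortedAbs b)
  simpa only [hσ, hτ] using hmono.sum_mul_le_sum_mul_comp_perm

theorem inner_le_sorted_and_le_sortedL1_general {p : ℕ} (lam : Fin p → ℝ)
    (b w : Fin p → ℝ) :
    (∑ i, w i * b i ≤ ∑ i, sortedAbs w i * sortedAbs b i) ∧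
    ((∀ i : Fin p, ∑ j ∈ Finset.Iic i, sortedAbs w j ≤ ∑ j ∈ Finset.Iic i, lam j) →
      ∑ i, w i * b i ≤ sortedL1 lam b) := by
  have hinner : ∑ i, w i * b i ≤ ∑ i, sortedAbs w i * sortedAbs b i :=
    calc ∑ i, w i * b i ≤ ∑ i, |w i| * |b i| :=
          sum_le_sum fun i _ => (abs_mul (w i) (b i)) ▸ le_abs_self _
      _ ≤ _ := sum_abs_mul_abs_le_sum_sortedAbs_mul w b
  exact ⟨hinner, fun hpartial => hinner.trans <| sum_mul_le_sum_mul_of_sum_Iic_le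
    (antitone_sortedAbs b) (fun _ => abs_nonneg _) hpartial⟩

/-- rearrangement inequality for the inner product and the
consequent dual bound for the sorted ℓ₁ norm. -/
theorem inner_le_sorted_and_le_sortedL1 {p : ℕ} (lam : Fin p → ℝ)
    (hmono : Antitone lam) (hnonneg : ∀ i, 0 ≤ lam i) (b w : Fin p → ℝ) :
    (∑ i, w i * b i ≤ ∑ i, sortedAbs w i * sortedAbs b i) ∧
    ((∀ i : Fin p, ∑ j ∈ Finset.Iic i, sortedAbs w j ≤ ∑ j ∈ Finset.Iic i, lam j) →
      ∑ i, w i * b i ≤ sortedL1 lam b) :=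
  inner_le_sorted_and_le_sortedL1_general lam b w
end
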